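/- Let 1 < r < √2 and define Θ(ℓ) = arccos(1 − r²/(2 − ℓ²/2)) for ℓ ∈ [0,r], so that (ℓ, Θ(ℓ)) lies on the boundary part ∂^θ of D_r where ‖v₂ − v₄‖ = r. Then the function ℓ ↦ κ(ℓ, Θ(ℓ)) is non-increasing on [0,r]. -/

import Mathlib

/-!
Along `∂^θ` the angle `Θ(ℓ)` is exactly the one making the first `arccos` argument of `κ`
the constant `r²/2 - 1`, so `κ(ℓ, Θ(ℓ)) = 2 arccos(r²/2 - 1) + 2 arccos(ℓ²/2 - 1)`,
which decreases in `ℓ ≥ 0` because `arccos` is antitone.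
-/

open Real

/-- Total curvature of the equilateral spatial quadrilateral `P₄(ℓ,θ)` in
action-angle coordinates. -/
noncomputable def totalCurv (ℓ θ : ℝ) : ℝ :=
  2 * Real.arccos (-ℓ ^ 2 / 4 - (1 - ℓ ^ 2 / 4) * Real.cos θ) +
    2 * Real.arccos (ℓ ^ 2 / 2 - 1)

/-- The angle `Θ(ℓ)` at which `‖v₂ - v₄‖ = r`. -/
noncomputable def boundaryAngle (r ℓ : ℝ) : ℝ :=
  arccos (1 - r ^ 2 / (2 - ℓ ^ 2 / 2))

lemma cos_boundaryAngle {r ℓ : ℝ} (hℓ : ℓ ^ 2 < 4) (hℓr : ℓ ^ 2 + r ^ 2 ≤ 4) :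
    cos (boundaryAngle r ℓ) = 1 - r ^ 2 / (2 - ℓ ^ 2 / 2) := by
  have hden : 0 < 2 - ℓ ^ 2 / 2 := by linarith
  have hq : r ^ 2 / (2 - ℓ ^ 2 / 2) ≤ 2 := by rw [div_le_iff₀ hden]; linarith
  exact cos_arccos (by linarith) (by linarith [div_nonneg (sq_nonneg r) hden.le])

lemma totalCurv_boundaryAngle {r ℓ : ℝ} (hℓ : ℓ ^ 2 < 4) (hℓr : ℓ ^ 2 + r ^ 2 ≤ 4) :
    totalCurv ℓ (boundaryAngle r ℓ) = 2 * arccos (r ^ 2 / 2 - 1) + 2 * arccos (ℓ ^ 2 / 2 - 1) := by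
  have hden : 2 - ℓ ^ 2 / 2 ≠ 0 := by linarith
  have hcancel : (1 - ℓ ^ 2 / 4) * (r ^ 2 / (2 - ℓ ^ 2 / 2)) = r ^ 2 / 2 := by
    rw [show 1 - ℓ ^ 2 / 4 = (2 - ℓ ^ 2 / 2) / 2 by ring, div_mul_div_comm, mul_comm,
      mul_div_mul_right _ _ hden]
  have harg : -ℓ ^ 2 / 4 - (1 - ℓ ^ 2 / 4) * (1 - r ^ 2 / (2 - ℓ ^ 2 / 2)) = r ^ 2 / 2 - 1 := by
    linear_combination hcancel
  rw [totalCurv, cos_boundaryAngle hℓ hℓr, harg]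

theorem totalCurv_antitoneOn_boundary_general (r : ℝ)
    (h2 : r < Real.sqrt 2) :
    AntitoneOn
      (fun ℓ : ℝ => totalCurv ℓ (Real.arccos (1 - r ^ 2 / (2 - ℓ ^ 2 / 2))))
      (Set.Icc 0 r) := by
  have hdom {ℓ : ℝ} (hℓ : ℓ ∈ Set.Icc 0 r) : ℓ ^ 2 < 4 ∧ ℓ ^ 2 + r ^ 2 ≤ 4 := by
    have hr2 : r ^ 2 < 2 := (lt_sqrt (hℓ.1.trans hℓ.2)).mp h2
    constructor <;> nlinarith [hℓ.1, hℓ.2]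
  intro a ha b hb hab
  change totalCurv b (boundaryAngle r b) ≤ totalCurv a (boundaryAngle r a)
  rw [totalCurv_boundaryAngle (hdom ha).1 (hdom ha).2,
    totalCurv_boundaryAngle (hdom hb).1 (hdom hb).2]
  have hab2 : a ^ 2 / 2 - 1 ≤ b ^ 2 / 2 - 1 := by nlinarith [ha.1]
  linarith [antitone_arccos hab2]

/-- For `1 < r < √2`, along the boundary part `∂^θ` of `D_r`, parametrized by
`ℓ ↦ (ℓ, Θ(ℓ))` with `Θ(ℓ) = arccos(1 − r²/(2 − ℓ²/2))`, the total curvature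
is non-increasing in `ℓ` on `[0,r]`. -/
theorem totalCurv_antitoneOn_boundary (r : ℝ) (h1 : 1 < r)
    (h2 : r < Real.sqrt 2) :
    AntitoneOn
      (fun ℓ : ℝ => totalCurv ℓ (Real.arccos (1 - r ^ 2 / (2 - ℓ ^ 2 / 2))))
      (Set.Icc 0 r) :=
  totalCurv_antitoneOn_boundary_general r h2
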